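/- Define the four Jacobi theta functions on the upper half-plane via q = e^{2πiz}: θ₀₀(z) = ∑_{n∈ℤ} q^{n²/2}, θ_{½,0}(z) = ∑_{n∈ℤ+½} q^{n²/2}, θ_{0,½}(z) = ∑_{n∈ℤ} (−1)ⁿ q^{n²/2}, and θ'_{½,½}(z) = ∑_{n∈ℤ+½} (−1)^{n−½} n q^{n²/2}. Then θ'_{½,½}(z) = η(z)³, where η(z) = q^{1/24} ∏_{n≥1} (1 − qⁿ) is the Dedekind eta function; in particular θ'_{½,½}(z) ≠ 0 for all z ∈ ℍ. -/

import Mathlib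

/-!
Put `q = e^{πiz}`. Then `θ'_{½,½}(z) = q^{1/4} ∑ₖ (-1)ᵏ (k + ½) q^{k² + k}` and
`η(z)³ = q^{1/4} ∏ₙ (1 - q^{2n})³`, and pairing `k` with `-1 - k` turns the sum into
`∑ₖ (-1)ᵏ k q^{k² + k}`. The `q`-binomial theorem gives the finite Jacobi triple product
`∏_{j<n} (1 + q^{2j+1} y)(1 + q^{2j+1} / y) = ∑_{|k| ≤ n} [2n, n+k]_{q²} q^{k²} yᵏ`.
Its left side vanishes to first order at `y = -q`, and differentiating there gives
`(q²;q²)ₙ (q²;q²)ₙ₋₁ = ∑_{|k| ≤ n} [2n, n+k]_{q²} (-1)ᵏ k q^{k² + k}`. As `n → ∞` the Gaussian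
binomials stay bounded and tend to `1 / (q²;q²)_∞`, so by Tannery's theorem
`∑ₖ (-1)ᵏ k q^{k² + k} = (q²;q²)_∞³`.
-/

/-- The Dedekind eta function `η(z) = q^{1/24} ∏_{n≥1} (1 − qⁿ)` with `q = e^{2πiz}`. -/
noncomputable def dedekindEta (z : ℂ) : ℂ :=
  Complex.exp ((Real.pi : ℂ) * Complex.I * z / 12) *
    ∏' n : ℕ, (1 - Complex.exp (2 * (Real.pi : ℂ) * Complex.I * ((n : ℂ) + 1) * z))

/-- The odd Jacobi theta derivative
`θ'_{½,½}(z) = ∑_{n ∈ ℤ+½} (−1)^{n−½} n q^{n²/2}` with `q = e^{2πiz}`. -/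
noncomputable def thetaHalfHalfDeriv (z : ℂ) : ℂ :=
  ∑' k : ℤ, (-1 : ℂ) ^ k * ((k : ℂ) + 1 / 2) *
    Complex.exp ((Real.pi : ℂ) * Complex.I * z * ((k : ℂ) + 1 / 2) ^ 2)

open Finset Filter Topology Complex
open scoped Real

section GaussianBinomial

variable {R : Type*} [CommRing R]

def gaussBinom (Q : R) : ℕ → ℕ → R
  | 0, 0 => 1
  | 0, _ + 1 => 0
  | _ + 1, 0 => 1
  | m + 1, j + 1 => Q ^ (j + 1) * gaussBinom Q m (j + 1) + gaussBinom Q m j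

@[simp] lemma gaussBinom_zero_right (Q : R) (m : ℕ) : gaussBinom Q m 0 = 1 := by
  cases m <;> rfl

lemma gaussBinom_succ_succ (Q : R) (m j : ℕ) :
    gaussBinom Q (m + 1) (j + 1) = Q ^ (j + 1) * gaussBinom Q m (j + 1) + gaussBinom Q m j :=
  rfl

lemma gaussBinom_eq_zero_of_lt (Q : R) {m j : ℕ} (h : m < j) : gaussBinom Q m j = 0 := by
  induction m generalizing j with
  | zero => obtain ⟨j, rfl⟩ := Nat.exists_eq_add_one.2 h; rfl
  | succ m ih =>
    obtain ⟨j, rfl⟩ := Nat.exists_eq_add_one.2 (m.succ_pos.trans h)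
    rw [gaussBinom_succ_succ, ih (by omega), ih (by omega), mul_zero, add_zero]

@[simp] lemma gaussBinom_self (Q : R) (m : ℕ) : gaussBinom Q m m = 1 := by
  induction m with
  | zero => rfl
  | succ m ih => rw [gaussBinom_succ_succ, gaussBinom_eq_zero_of_lt Q m.lt_succ_self, ih,
      mul_zero, zero_add]

theorem prod_range_one_add_mul_pow (Q x : R) (m : ℕ) :
    ∏ i ∈ range m, (1 + x * Q ^ i) =
      ∑ j ∈ range (m + 1), gaussBinom Q m j * Q ^ j.choose 2 * x ^ j := by
  induction m generalizing x with
  | zero => simp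
  | succ m ih =>
    set c : ℕ → R := fun j => gaussBinom Q m j * Q ^ (j + 1).choose 2 * x ^ j
    have hc0 : c 0 = 1 := by simp [c]
    have hctop : c (m + 1) = 0 := by simp [c, gaussBinom_eq_zero_of_lt Q m.lt_succ_self]
    have hprod : ∏ i ∈ range (m + 1), (1 + x * Q ^ i) = (1 + x) * ∑ j ∈ range (m + 1), c j := by
      simp_rw [prod_range_succ', pow_succ', ← mul_assoc]
      rw [ih (x * Q), pow_zero, mul_one, mul_comm]
      refine congrArg _ (sum_congr rfl fun j _ => ?_)
      simp only [c, Nat.choose_succ_succ', Nat.choose_one_right]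
      ring
    have hterm : ∀ j, gaussBinom Q (m + 1) (j + 1) * Q ^ (j + 1).choose 2 * x ^ (j + 1) =
        c (j + 1) + x * c j := by
      intro j
      simp only [c, gaussBinom_succ_succ, Nat.choose_succ_succ' (j + 1), Nat.choose_one_right]
      ring
    have hshift : ∑ j ∈ range (m + 1), c (j + 1) = ∑ j ∈ range (m + 1), c j - 1 := by
      have := sum_range_succ' c (m + 1)
      rw [sum_range_succ, hctop, hc0] at this
      linear_combination -this
    rw [hprod, sum_range_succ' (fun j => gaussBinom Q (m + 1) j * _ * _),
      sum_congr rfl fun j _ => hterm j, sum_add_distrib, ← mul_sum, hshift]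
    simp only [gaussBinom_zero_right, Nat.choose_zero_succ, pow_zero, mul_one]
    ring

def qPochhammer (Q : R) (n : ℕ) : R := ∏ i ∈ range n, (1 - Q ^ (i + 1))

lemma qPochhammer_succ (Q : R) (n : ℕ) :
    qPochhammer Q (n + 1) = qPochhammer Q n * (1 - Q ^ (n + 1)) :=
  prod_range_succ _ n

theorem gaussBinom_add_mul_qPochhammer_mul_qPochhammer (Q : R) (m j : ℕ) :
    gaussBinom Q (m + j) j * qPochhammer Q j * qPochhammer Q m = qPochhammer Q (m + j) := by
  induction j generalizing m with
  | zero => simp [qPochhammer]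
  | succ j ihj =>
    induction m with
    | zero => simp [qPochhammer]
    | succ m ihm =>
      have h2 := ihj (m + 1)
      rw [← add_assoc] at ihm
      rw [Nat.add_right_comm] at h2
      rw [show m + 1 + (j + 1) = m + j + 1 + 1 by omega, gaussBinom_succ_succ,
        qPochhammer_succ Q (m + j + 1)]
      simp only [qPochhammer_succ Q j, qPochhammer_succ Q m] at ihm h2 ⊢
      linear_combination Q ^ (j + 1) * (1 - Q ^ (m + 1)) * ihm + (1 - Q ^ (j + 1)) * h2

end GaussianBinomial

lemma gaussBinom_add_eq_div {K : Type*} [Field K] {Q : K} {m j : ℕ} (hj : qPochhammer Q j ≠ 0)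
    (hm : qPochhammer Q m ≠ 0) :
    gaussBinom Q (m + j) j = qPochhammer Q (m + j) / (qPochhammer Q j * qPochhammer Q m) := by
  rw [eq_div_iff (mul_ne_zero hj hm), ← mul_assoc,
    gaussBinom_add_mul_qPochhammer_mul_qPochhammer]

lemma two_mul_choose_two_add_self (j : ℕ) : 2 * j.choose 2 + j = j ^ 2 := by
  induction j with
  | zero => rfl
  | succ j ih => rw [Nat.choose_succ_succ', Nat.choose_one_right]; linear_combination ih

lemma sum_range_two_mul_add_one (n : ℕ) : ∑ j ∈ range n, (2 * j + 1) = n ^ 2 := by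
  induction n with
  | zero => rfl
  | succ n ih => rw [sum_range_succ, ih]; ring

lemma sum_Icc_neg_toNat {M : Type*} [AddCommMonoid M] (f : ℕ → M) (n : ℕ) :
    ∑ k ∈ Icc (-n : ℤ) n, f (n + k).toNat = ∑ j ∈ range (2 * n + 1), f j := by
  refine sum_nbij' (fun k => (n + k).toNat) (fun j => j - n) ?_ ?_ ?_ ?_ (fun _ _ => rfl) <;>
    intro a ha <;> simp only [mem_Icc, mem_range] at ha ⊢ <;> omega

section TripleProduct

variable {K : Type*} [Field K] {q y : K}

lemma prod_range_two_mul_one_add (hq : q ≠ 0) (hy : y ≠ 0) (n : ℕ) :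
    ∏ i ∈ range (2 * n), (1 + y / q ^ (2 * n) * q * (q ^ 2) ^ i) =
      y ^ n / q ^ (n ^ 2) *
        ∏ j ∈ range n, (1 + q ^ (2 * j + 1) * y) * (1 + q ^ (2 * j + 1) * y⁻¹) := by
  set x := y / q ^ (2 * n) * q with hx
  have hupper : ∀ j, 1 + x * (q ^ 2) ^ (n + j) = 1 + q ^ (2 * j + 1) * y := by
    intro j
    rw [hx]
    field_simp
    ring
  have hlower : ∀ j ∈ range n, 1 + x * (q ^ 2) ^ (n - 1 - j) =
      y / q ^ (2 * j + 1) * (1 + q ^ (2 * j + 1) * y⁻¹) := by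
    intro j hj
    have hexp : (q ^ 2) ^ (n - 1 - j) * q * q ^ (2 * j + 1) = q ^ (2 * n) := by
      rw [← pow_mul, ← pow_succ, ← pow_add]
      congr 1
      have := mem_range.1 hj
      omega
    rw [hx]
    field_simp
    linear_combination y * hexp
  rw [two_mul, prod_range_add, prod_congr rfl fun j _ => hupper j, ← prod_range_reflect,
    prod_congr rfl hlower, prod_mul_distrib, prod_div_distrib, prod_const, card_range,
    prod_pow_eq_pow_sum, sum_range_two_mul_add_one, prod_mul_distrib]
  ring

theorem prod_range_one_add_mul_one_add_inv (hq : q ≠ 0) (hy : y ≠ 0) (n : ℕ) :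
    ∏ j ∈ range n, (1 + q ^ (2 * j + 1) * y) * (1 + q ^ (2 * j + 1) * y⁻¹) =
      ∑ k ∈ Icc (-n : ℤ) n, gaussBinom (q ^ 2) (2 * n) (n + k).toNat * q ^ (k ^ 2) * y ^ k := by
  have h := prod_range_one_add_mul_pow (q ^ 2) (y / q ^ (2 * n) * q) (2 * n)
  have hterm : ∀ k ∈ Icc (-n : ℤ) n,
      gaussBinom (q ^ 2) (2 * n) (n + k).toNat * (q ^ 2) ^ (n + k).toNat.choose 2 *
        (y / q ^ (2 * n) * q) ^ (n + k).toNat =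
      y ^ n / q ^ (n ^ 2) * (gaussBinom (q ^ 2) (2 * n) (n + k).toNat * q ^ (k ^ 2) * y ^ k) := by
    intro k hk
    set j := (n + k).toNat
    have hkj : k = j - n := by rw [mem_Icc] at hk; omega
    rw [hkj, show ((j : ℤ) - n) ^ 2 = ((j ^ 2 + n ^ 2 : ℕ) : ℤ) - ((2 * n * j : ℕ) : ℤ) by
      push_cast; ring, zpow_sub₀ hq, zpow_sub₀ hy, ← two_mul_choose_two_add_self j]
    simp only [zpow_natCast, mul_pow, div_pow, ← pow_mul]
    field_simp
    ring
  rw [prod_range_two_mul_one_add hq hy n, ← sum_Icc_neg_toNat, sum_congr rfl hterm,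
    ← mul_sum] at h
  exact mul_left_cancel₀ (div_ne_zero (pow_ne_zero _ hy) (pow_ne_zero _ hq)) h

lemma prod_range_succ_one_sub_mul_one_sub_inv {K : Type*} [Field K] {q w : K} (hq : q ≠ 0)
    (hw : w ≠ 0) (n : ℕ) :
    ∏ j ∈ range (n + 1),
        (1 + q ^ (2 * j + 1) * -(q * w)) * (1 + q ^ (2 * j + 1) * (-(q * w))⁻¹) =
      (1 - w⁻¹) * ((∏ j ∈ range (n + 1), (1 - (q ^ 2) ^ (j + 1) * w)) *
        ∏ j ∈ range n, (1 - (q ^ 2) ^ (j + 1) * w⁻¹)) := by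
  have hfirst : ∀ j, 1 + q ^ (2 * j + 1) * -(q * w) = 1 - (q ^ 2) ^ (j + 1) * w := fun j => by
    ring
  have hsecond : ∀ j, 1 + q ^ (2 * j + 1) * (-(q * w))⁻¹ = 1 - (q ^ 2) ^ j * w⁻¹ := fun j => by
    field_simp
    ring
  simp only [prod_mul_distrib, hfirst, hsecond]
  rw [prod_range_succ' (fun j => 1 - (q ^ 2) ^ j * w⁻¹)]
  ring

end TripleProduct

section Derivative

variable {𝕜 : Type*} [NontriviallyNormedField 𝕜]

/-- Differentiating the finite triple product at `y = -q`, where it vanishes. -/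
theorem qPochhammer_succ_mul_qPochhammer {q : 𝕜} (hq : q ≠ 0) (n : ℕ) :
    qPochhammer (q ^ 2) (n + 1) * qPochhammer (q ^ 2) n =
      ∑ k ∈ Icc (-(n + 1 : ℕ) : ℤ) (n + 1 : ℕ),
        gaussBinom (q ^ 2) (2 * (n + 1)) ((n + 1 : ℕ) + k).toNat *
          (q ^ (k ^ 2) * (-q) ^ k * k) := by
  set c : ℤ → 𝕜 := fun k => gaussBinom (q ^ 2) (2 * (n + 1)) ((n + 1 : ℕ) + k).toNat *
    (q ^ (k ^ 2) * (-q) ^ k)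
  set A : 𝕜 → 𝕜 := fun w => (∏ j ∈ range (n + 1), (1 - (q ^ 2) ^ (j + 1) * w)) *
    ∏ j ∈ range n, (1 - (q ^ 2) ^ (j + 1) * w⁻¹)
  have hLaurent : ∀ᶠ w in 𝓝 (1 : 𝕜),
      (1 - w⁻¹) * A w = ∑ k ∈ Icc (-(n + 1 : ℕ) : ℤ) (n + 1 : ℕ), c k * w ^ k := by
    filter_upwards [isOpen_ne.mem_nhds one_ne_zero] with w hw
    rw [← prod_range_succ_one_sub_mul_one_sub_inv hq hw, prod_range_one_add_mul_one_add_inv hq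
      (neg_ne_zero.2 (mul_ne_zero hq hw))]
    refine sum_congr rfl fun k _ => ?_
    simp only [c, neg_mul_eq_neg_mul q w, mul_zpow]
    ring
  have hA : DifferentiableAt 𝕜 A 1 := by
    fun_prop (disch := exact one_ne_zero)
  have hleft : HasDerivAt (fun w => (1 - w⁻¹) * A w) (A 1) 1 := by
    simpa using ((hasDerivAt_inv one_ne_zero).const_sub 1).fun_mul hA.hasDerivAt
  have hright : HasDerivAt (fun w => ∑ k ∈ Icc (-(n + 1 : ℕ) : ℤ) (n + 1 : ℕ), c k * w ^ k)
      (∑ k ∈ Icc (-(n + 1 : ℕ) : ℤ) (n + 1 : ℕ), c k * k) 1 := by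
    refine HasDerivAt.fun_sum fun k _ => ?_
    simpa using (hasDerivAt_zpow k 1 (Or.inl one_ne_zero)).const_mul (c k)
  have := hleft.unique (hright.congr_of_eventuallyEq hLaurent)
  simpa [A, c, qPochhammer, mul_assoc] using this

end Derivative

lemma tendsto_toNat_natCast_add_atTop (k : ℤ) :
    Tendsto (fun n : ℕ => ((n : ℤ) + k).toNat) atTop atTop :=
  tendsto_atTop.2 fun b => (eventually_ge_atTop (b + k.natAbs)).mono fun n hn => by omega

section Limits

variable {Q : ℂ}

lemma tendsto_qPochhammer (hQ : ‖Q‖ < 1) :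
    Tendsto (qPochhammer Q) atTop (𝓝 (∏' n : ℕ, (1 - Q ^ (n + 1)))) :=
  (ModularForm.multipliable_one_sub_pow hQ).hasProd.tendsto_prod_nat

lemma one_sub_pow_succ_ne_zero (hQ : ‖Q‖ < 1) (n : ℕ) : 1 - Q ^ (n + 1) ≠ 0 := by
  refine sub_ne_zero.2 fun h => ?_
  have := congrArg norm h
  rw [norm_one, norm_pow] at this
  exact (pow_lt_one₀ (norm_nonneg Q) hQ n.succ_ne_zero).ne' this

lemma tprod_one_sub_pow_ne_zero (hQ : ‖Q‖ < 1) : ∏' n : ℕ, (1 - Q ^ (n + 1)) ≠ 0 := by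
  simpa [sub_eq_add_neg] using tprod_one_add_ne_zero_of_summable (f := fun n => -Q ^ (n + 1))
    (by simpa [sub_eq_add_neg] using one_sub_pow_succ_ne_zero hQ)
    (by simpa using (summable_nat_add_iff 1).2 (summable_geometric_of_lt_one (norm_nonneg Q) hQ))

lemma qPochhammer_ne_zero (hQ : ‖Q‖ < 1) (n : ℕ) : qPochhammer Q n ≠ 0 :=
  prod_ne_zero_iff.2 fun i _ => one_sub_pow_succ_ne_zero hQ i

lemma exists_norm_gaussBinom_le (hQ : ‖Q‖ < 1) : ∃ C, ∀ m j, ‖gaussBinom Q m j‖ ≤ C := by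
  obtain ⟨C, hC⟩ := isBounded_iff_forall_norm_le.1
    (Metric.isBounded_range_of_tendsto _ (tendsto_qPochhammer hQ))
  obtain ⟨C', hC'⟩ := isBounded_iff_forall_norm_le.1
    (Metric.isBounded_range_of_tendsto _ ((tendsto_qPochhammer hQ).inv₀
      (tprod_one_sub_pow_ne_zero hQ)))
  have hC0 : 0 ≤ C := (norm_nonneg _).trans (hC _ ⟨0, rfl⟩)
  have hC'0 : 0 ≤ C' := (norm_nonneg _).trans (hC' _ ⟨0, rfl⟩)
  refine ⟨C * C' * C', fun m j => ?_⟩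
  rcases lt_or_ge m j with hmj | hjm
  · rw [gaussBinom_eq_zero_of_lt Q hmj, norm_zero]
    positivity
  obtain ⟨m, rfl⟩ := Nat.exists_eq_add_of_le' hjm
  rw [gaussBinom_add_eq_div (qPochhammer_ne_zero hQ j) (qPochhammer_ne_zero hQ m), div_eq_mul_inv,
    mul_inv, ← mul_assoc, norm_mul, norm_mul]
  exact mul_le_mul (mul_le_mul (hC _ ⟨_, rfl⟩) (hC' _ ⟨j, rfl⟩) (norm_nonneg _) hC0)
    (hC' _ ⟨m, rfl⟩) (norm_nonneg _) (mul_nonneg hC0 hC'0)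

lemma tendsto_gaussBinom_two_mul (hQ : ‖Q‖ < 1) (k : ℤ) :
    Tendsto (fun n : ℕ => gaussBinom Q (2 * n) ((n : ℤ) + k).toNat) atTop
      (𝓝 (∏' n : ℕ, (1 - Q ^ (n + 1)))⁻¹) := by
  set E := ∏' n : ℕ, (1 - Q ^ (n + 1))
  have hE := tprod_one_sub_pow_ne_zero hQ
  have hlim : Tendsto (fun n : ℕ => qPochhammer Q (2 * n) /
      (qPochhammer Q ((n : ℤ) + k).toNat * qPochhammer Q ((n : ℤ) + -k).toNat)) atTop
      (𝓝 (E / (E * E))) :=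
    ((tendsto_qPochhammer hQ).comp (tendsto_id.const_mul_atTop' two_pos)).div
      (((tendsto_qPochhammer hQ).comp (tendsto_toNat_natCast_add_atTop k)).mul
        ((tendsto_qPochhammer hQ).comp (tendsto_toNat_natCast_add_atTop (-k))))
      (mul_ne_zero hE hE)
  rw [show E / (E * E) = E⁻¹ by field_simp] at hlim
  refine hlim.congr' ((eventually_ge_atTop k.natAbs).mono fun n hn => ?_)
  have hsplit : 2 * n = ((n : ℤ) + -k).toNat + ((n : ℤ) + k).toNat := by omega
  dsimp only
  rw [hsplit, gaussBinom_add_eq_div (qPochhammer_ne_zero hQ _) (qPochhammer_ne_zero hQ _)]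

end Limits

lemma exists_cexp_pi_mul_I_eq {q : ℂ} (hq0 : q ≠ 0) (hq : ‖q‖ < 1) :
    ∃ τ : ℂ, 0 < τ.im ∧ cexp (π * I * τ) = q := by
  refine ⟨log q / (π * I), ?_, ?_⟩
  · have him : (log q / (π * I)).im = -Real.log ‖q‖ / π := by
      simp [div_eq_mul_inv, Complex.log_re]
    rw [him]
    exact div_pos (neg_pos.2 (Real.log_neg (norm_pos_iff.2 hq0) hq)) Real.pi_pos
  · rw [mul_div_cancel₀ _ (by simp [Real.pi_ne_zero]), exp_log hq0]

lemma cexp_zpow_sq_mul_neg_cexp_zpow (τ : ℂ) (k : ℤ) :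
    cexp (π * I * τ) ^ (k ^ 2) * (-cexp (π * I * τ)) ^ k =
      jacobiTheta₂_term k ((τ + 1) / 2) τ := by
  rw [jacobiTheta₂_term, ← mul_neg_one, ← exp_pi_mul_I, ← Complex.exp_add, ← exp_int_mul,
    ← exp_int_mul, ← Complex.exp_add]
  congr 1
  push_cast
  ring

lemma summable_zpow_sq_mul_neg_zpow_mul {q : ℂ} (hq0 : q ≠ 0) (hq : ‖q‖ < 1) :
    Summable fun k : ℤ => q ^ (k ^ 2) * (-q) ^ k * k := by
  obtain ⟨τ, hτ, rfl⟩ := exists_cexp_pi_mul_I_eq hq0 hq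
  refine (((summable_jacobiTheta₂'_term_iff ((τ + 1) / 2) τ).2 hτ).div_const (2 * π * I)).congr
    fun k => ?_
  rw [jacobiTheta₂'_term, ← cexp_zpow_sq_mul_neg_cexp_zpow]
  field_simp

theorem tsum_zpow_sq_mul_neg_zpow_mul {q : ℂ} (hq0 : q ≠ 0) (hq : ‖q‖ < 1) :
    ∑' k : ℤ, q ^ (k ^ 2) * (-q) ^ k * k = (∏' n : ℕ, (1 - (q ^ 2) ^ (n + 1))) ^ 3 := by
  have hQ : ‖q ^ 2‖ < 1 := by rw [norm_pow]; exact pow_lt_one₀ (norm_nonneg q) hq two_ne_zero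
  set E := ∏' n : ℕ, (1 - (q ^ 2) ^ (n + 1))
  have hE : E ≠ 0 := tprod_one_sub_pow_ne_zero hQ
  set T : ℤ → ℂ := fun k => q ^ (k ^ 2) * (-q) ^ k * k
  set F : ℕ → ℤ → ℂ := fun n => (Icc (-n : ℤ) n : Set ℤ).indicator fun k =>
    gaussBinom (q ^ 2) (2 * n) ((n : ℤ) + k).toNat * T k
  have hfinite (n : ℕ) :
      qPochhammer (q ^ 2) (n + 1) * qPochhammer (q ^ 2) n = ∑' k, F (n + 1) k := by
    simp only [F, T, ← sum_eq_tsum_indicator]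
    exact qPochhammer_succ_mul_qPochhammer hq0 n
  have hleft : Tendsto (fun n => qPochhammer (q ^ 2) (n + 1) * qPochhammer (q ^ 2) n) atTop
      (𝓝 (E * E)) :=
    ((tendsto_qPochhammer hQ).comp (tendsto_add_atTop_nat 1)).mul (tendsto_qPochhammer hQ)
  obtain ⟨C, hC⟩ := exists_norm_gaussBinom_le hQ
  have hright : Tendsto (fun n => ∑' k, F (n + 1) k) atTop (𝓝 (∑' k, E⁻¹ * T k)) := by
    refine tendsto_tsum_of_dominated_convergence (bound := fun k => C * ‖T k‖)
      ((summable_zpow_sq_mul_neg_zpow_mul hq0 hq).norm.mul_left C) (fun k => ?_)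
      (.of_forall fun n k => ?_)
    · refine (((tendsto_gaussBinom_two_mul hQ k).comp (tendsto_add_atTop_nat 1)).mul_const
        (T k)).congr' ((eventually_ge_atTop k.natAbs).mono fun n hn => ?_)
      simp only [F, Function.comp_apply]
      rw [Set.indicator_of_mem (by simp only [coe_Icc, Set.mem_Icc]; omega)]
    · refine (norm_indicator_le_norm_self _ _).trans ?_
      rw [norm_mul]
      exact mul_le_mul_of_nonneg_right (hC _ _) (norm_nonneg _)
  have hEE : E * E = E⁻¹ * ∑' k, T k := by
    rw [← tsum_mul_left]
    exact tendsto_nhds_unique (hleft.congr hfinite) hright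
  field_simp at hEE
  exact hEE.symm

lemma zpow_sq_mul_neg_zpow_neg_one_sub {K : Type*} [Field K] {x : K} (hx : x ≠ 0) (k : ℤ) :
    x ^ ((-1 - k) ^ 2) * (-x) ^ (-1 - k) = -(x ^ (k ^ 2) * (-x) ^ k) := by
  have hx' : -x ≠ 0 := neg_ne_zero.2 hx
  have hsq : x ^ ((-1 - k) ^ 2) = x ^ (k ^ 2) * x ^ (2 * k) * x := by
    rw [← zpow_add₀ hx, ← zpow_add_one₀ hx]; congr 1; ring
  rw [hsq, ← (even_two_mul k).neg_zpow, show -1 - k = -(2 * k + 1) + k by ring,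
    zpow_add₀ hx', zpow_neg, zpow_add_one₀ hx']
  field_simp

/-- Average over the involution `k ↦ -1 - k`. -/
lemma tsum_mul_add_half_of_neg_one_sub {a : ℤ → ℂ} (ha : ∀ k, a (-1 - k) = -a k)
    (hs : Summable fun k : ℤ => a k * k) :
    ∑' k : ℤ, a k * (k + 1 / 2) = ∑' k : ℤ, a k * k := by
  have hreflect : ∀ k : ℤ, a (-1 - k) * ((-1 - k : ℤ) : ℂ) = a k * (k + 1) := fun k => by
    rw [ha]; push_cast; ring
  have hs' : Summable fun k : ℤ => a k * (k + 1) :=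
    ((Equiv.subLeft (-1 : ℤ)).summable_iff.2 hs).congr hreflect
  have hshift : ∑' k : ℤ, a k * (k + 1) = ∑' k : ℤ, a k * k := by
    rw [← (Equiv.subLeft (-1 : ℤ)).tsum_eq (fun k : ℤ => a k * k)]
    exact tsum_congr fun k => (hreflect k).symm
  calc ∑' k : ℤ, a k * (k + 1 / 2) = ∑' k : ℤ, (a k * k / 2 + a k * (k + 1) / 2) :=
        tsum_congr fun k => by ring
    _ = ∑' k : ℤ, a k * k := by
        rw [(hs.div_const 2).tsum_add (hs'.div_const 2), tsum_div_const, tsum_div_const, hshift]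
        ring

lemma norm_cexp_pi_mul_I_lt_one {z : ℂ} (hz : 0 < z.im) : ‖cexp (π * I * z)‖ < 1 := by
  rw [norm_exp, Real.exp_lt_one_iff]
  simpa using mul_pos Real.pi_pos hz

lemma thetaHalfHalfDeriv_eq {z : ℂ} (hz : 0 < z.im) :
    thetaHalfHalfDeriv z = cexp (π * I * z / 4) *
      ∑' k : ℤ, cexp (π * I * z) ^ (k ^ 2) * (-cexp (π * I * z)) ^ k * k := by
  set q := cexp (π * I * z)
  have hq0 : q ≠ 0 := exp_ne_zero _
  have hterm (k : ℤ) :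
      (-1 : ℂ) ^ k * ((k : ℂ) + 1 / 2) * cexp (π * I * z * ((k : ℂ) + 1 / 2) ^ 2) =
        cexp (π * I * z / 4) * (q ^ (k ^ 2) * (-q) ^ k * ((k : ℂ) + 1 / 2)) := by
    rw [neg_eq_neg_one_mul q, mul_zpow, show cexp (π * I * z * ((k : ℂ) + 1 / 2) ^ 2) =
      cexp (π * I * z / 4) * q ^ (k ^ 2) * q ^ k by
        rw [← exp_int_mul, ← exp_int_mul, ← Complex.exp_add, ← Complex.exp_add]
        congr 1
        push_cast
        ring]
    ring
  rw [thetaHalfHalfDeriv, tsum_congr hterm, tsum_mul_left,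
    tsum_mul_add_half_of_neg_one_sub (a := fun k => q ^ (k ^ 2) * (-q) ^ k)
      (zpow_sq_mul_neg_zpow_neg_one_sub hq0)
      (summable_zpow_sq_mul_neg_zpow_mul hq0 (norm_cexp_pi_mul_I_lt_one hz))]

lemma dedekindEta_eq (z : ℂ) :
    dedekindEta z =
      cexp (π * I * z / 12) * ∏' n : ℕ, (1 - (cexp (π * I * z) ^ 2) ^ (n + 1)) := by
  rw [dedekindEta]
  congr 2
  funext n
  rw [← pow_mul, ← Complex.exp_nat_mul]
  congr 2
  push_cast
  ring

/-- Jacobi's derivative formula: `θ'_{½,½}(z) = η(z)³` on the upper half-plane;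
in particular `θ'_{½,½}(z) ≠ 0` there. -/
theorem stmt_14 (z : ℂ) (hz : 0 < z.im) :
    thetaHalfHalfDeriv z = dedekindEta z ^ 3 ∧ thetaHalfHalfDeriv z ≠ 0 := by
  set q := cexp (π * I * z)
  have hq : ‖q‖ < 1 := norm_cexp_pi_mul_I_lt_one hz
  have hθ : thetaHalfHalfDeriv z =
      cexp (π * I * z / 4) * (∏' n : ℕ, (1 - (q ^ 2) ^ (n + 1))) ^ 3 := by
    rw [thetaHalfHalfDeriv_eq hz, tsum_zpow_sq_mul_neg_zpow_mul (exp_ne_zero _) hq]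
  refine ⟨?_, ?_⟩
  · rw [hθ, dedekindEta_eq, mul_pow, ← Complex.exp_nat_mul _ 3]
    congr 2
    push_cast
    ring
  · rw [hθ]
    refine mul_ne_zero (exp_ne_zero _) (pow_ne_zero _ (tprod_one_sub_pow_ne_zero ?_))
    rw [norm_pow]
    exact pow_lt_one₀ (norm_nonneg q) hq two_ne_zero
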